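/- (Proposition 4, first part.) Let Λ be a return-covariance based cross-impact model (a map (Σ,Ω) ↦ Λ(Σ,Ω), Σ symmetric positive semidefinite, Ω symmetric positive definite, not depending on R) which is split-invariant and rotation-invariant. Then for every such (Σ,Ω), every invertible real matrix L with Ω = L Lᵀ, and every real orthogonal matrix U such that Uᵀ (Lᵀ Σ L) U = diag(μ) is diagonal, one has Λ(Σ,Ω) = (L⁻¹)ᵀ · U · Λ(diag(μ), I) · Uᵀ · L⁻¹, i.e. Λ is completely determined by its values F(μ) := Λ(diag(μ), I) on pairs of a diagonal matrix and the identity. -/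

import Mathlib

open Matrix
open scoped Classical

/-- `sqrtm A` is the unique symmetric positive semidefinite square root of a
symmetric positive semidefinite real matrix `A` (junk value `0` otherwise). -/
noncomputable def sqrtm {n : ℕ} (A : Matrix (Fin n) (Fin n) ℝ) : Matrix (Fin n) (Fin n) ℝ :=
  if h : A.PosSemidef then
    (h.1.eigenvectorUnitary : Matrix (Fin n) (Fin n) ℝ) *
      diagonal (RCLike.ofReal ∘ Real.sqrt ∘ h.1.eigenvalues) *
      (star h.1.eigenvectorUnitary : Matrix (Fin n) (Fin n) ℝ)
  else 0

/-- The Kyle cross-impact matrix `Λ_kyle(Σ,Ω) = (√Ω)⁻¹ √(√Ω Σ √Ω) (√Ω)⁻¹`. -/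
noncomputable def kyle {n : ℕ} (S W : Matrix (Fin n) (Fin n) ℝ) : Matrix (Fin n) (Fin n) ℝ :=
  (sqrtm W)⁻¹ * sqrtm (sqrtm W * S * sqrtm W) * (sqrtm W)⁻¹

/-!
Every invertible `L` has a singular value decomposition `L = Q * diagonal d * V` with `Q`, `V`
orthogonal and `d > 0`, and then `(L⁻¹)ᵀ = Q * (diagonal d)⁻¹ * V`. Rotating by `V`, splitting
by `d` and rotating by `Q` therefore carries `(T, 1)` to `((L⁻¹)ᵀ * T * L⁻¹, L * Lᵀ)`, so that
`Λ(S, L Lᵀ) = (L⁻¹)ᵀ Λ(Lᵀ S L, 1) L⁻¹`. Finally `Lᵀ S L = U * diagonal μ * Uᵀ`, and one more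
rotation, by `U`, reduces `Λ(Lᵀ S L, 1)` to `Λ(diagonal μ, 1)`.
-/

namespace Matrix

variable {ι κ : Type*} [Fintype ι] [Fintype κ]

theorem PosSemidef.transpose_mul_mul_same {S : Matrix ι ι ℝ} (hS : S.PosSemidef)
    (B : Matrix ι κ ℝ) : (Bᵀ * S * B).PosSemidef := by
  simpa only [conjTranspose_eq_transpose_of_trivial] using hS.conjTranspose_mul_mul_same B

theorem PosSemidef.mul_mul_transpose_same {S : Matrix ι ι ℝ} (hS : S.PosSemidef)
    (B : Matrix κ ι ℝ) : (B * S * Bᵀ).PosSemidef := by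
  simpa only [conjTranspose_eq_transpose_of_trivial] using hS.mul_mul_conjTranspose_same B

theorem isUnit_det_diagonal_of_pos [DecidableEq ι] {d : ι → ℝ} (hd : ∀ i, 0 < d i) :
    IsUnit (diagonal d).det := by
  rw [det_diagonal]
  exact (Finset.prod_pos fun i _ => hd i).ne'.isUnit

theorem exists_orthogonal_mul_diagonal_mul_orthogonal [DecidableEq ι] {L : Matrix ι ι ℝ}
    (hL : IsUnit L.det) :
    ∃ Q V : Matrix ι ι ℝ, Q * Qᵀ = 1 ∧ V * Vᵀ = 1 ∧
      ∃ d : ι → ℝ, (∀ i, 0 < d i) ∧ L = Q * diagonal d * V := by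
  have hW : (L * Lᵀ).PosDef := by
    simpa only [mul_one, conjTranspose_eq_transpose_of_trivial] using
      PosDef.one.mul_mul_conjTranspose_same (vecMul_injective_iff_isUnit.mpr
        ((isUnit_iff_isUnit_det L).mpr hL))
  set Q : Matrix ι ι ℝ := (hW.1.eigenvectorUnitary : Matrix ι ι ℝ)
  set w := hW.1.eigenvalues
  have hQ : Q * Qᵀ = 1 := by
    simpa only [star_eq_conjTranspose, conjTranspose_eq_transpose_of_trivial] using
      mem_unitaryGroup_iff.mp hW.1.eigenvectorUnitary.2
  have hW_eq : L * Lᵀ = Q * diagonal w * Qᵀ := by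
    simpa [RCLike.ofReal_real_eq_id, star_eq_conjTranspose] using hW.1.spectral_theorem
  set d : ι → ℝ := fun i => √(w i)
  have hd : ∀ i, 0 < d i := fun i => Real.sqrt_pos.mpr (hW.eigenvalues_pos i)
  have hdd : diagonal d * diagonal d = diagonal w := by
    rw [diagonal_mul_diagonal]
    exact congrArg diagonal (funext fun i => Real.mul_self_sqrt (hW.eigenvalues_pos i).le)
  have hD : IsUnit (diagonal d).det := isUnit_det_diagonal_of_pos hd
  have hQ' : Qᵀ * Q = 1 := mul_eq_one_comm.mp hQ
  refine ⟨Q, (diagonal d)⁻¹ * Qᵀ * L, hQ, ?_, d, hd, ?_⟩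
  · calc (diagonal d)⁻¹ * Qᵀ * L * ((diagonal d)⁻¹ * Qᵀ * L)ᵀ
          = (diagonal d)⁻¹ * Qᵀ * (L * Lᵀ) * Q * (diagonal d)⁻¹ := by
            simp only [transpose_mul, transpose_nonsing_inv, diagonal_transpose,
              transpose_transpose, mul_assoc]
        _ = (diagonal d)⁻¹ * (Qᵀ * Q) * (diagonal d * diagonal d) * (Qᵀ * Q) * (diagonal d)⁻¹ := by
            rw [hW_eq, ← hdd]
            simp only [mul_assoc]
        _ = 1 := by
            simp only [hQ', mul_one, ← mul_assoc, nonsing_inv_mul _ hD, one_mul]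
            exact mul_nonsing_inv _ hD
  · simp only [← mul_assoc, mul_nonsing_inv_cancel_right _ _ hD, hQ, one_mul]

end Matrix

namespace CrossImpact

variable {ι : Type*} [Fintype ι]

def SplitInvariant [DecidableEq ι] (Λ : Matrix ι ι ℝ → Matrix ι ι ℝ → Matrix ι ι ℝ) : Prop :=
  ∀ S W : Matrix ι ι ℝ, S.PosSemidef → W.PosDef → ∀ d : ι → ℝ, (∀ i, 0 < d i) →
    Λ ((diagonal d)⁻¹ * S * (diagonal d)⁻¹) (diagonal d * W * diagonal d)
      = (diagonal d)⁻¹ * Λ S W * (diagonal d)⁻¹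

def RotationInvariant [DecidableEq ι] (Λ : Matrix ι ι ℝ → Matrix ι ι ℝ → Matrix ι ι ℝ) : Prop :=
  ∀ S W : Matrix ι ι ℝ, S.PosSemidef → W.PosDef → ∀ O : Matrix ι ι ℝ, O * Oᵀ = 1 →
    Λ (O * S * Oᵀ) (O * W * Oᵀ) = O * Λ S W * Oᵀ

variable [DecidableEq ι] {Λ : Matrix ι ι ℝ → Matrix ι ι ℝ → Matrix ι ι ℝ}

theorem RotationInvariant.apply_mul_mul_transpose_one (hrot : RotationInvariant Λ)
    {T : Matrix ι ι ℝ} (hT : T.PosSemidef) {O : Matrix ι ι ℝ} (hO : O * Oᵀ = 1) :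
    Λ (O * T * Oᵀ) 1 = O * Λ T 1 * Oᵀ := by
  simpa only [mul_one, hO] using hrot T 1 hT PosDef.one O hO

theorem apply_orthogonal_diagonal_orthogonal (hsplit : SplitInvariant Λ)
    (hrot : RotationInvariant Λ) {T : Matrix ι ι ℝ} (hT : T.PosSemidef) {Q V : Matrix ι ι ℝ}
    (hQ : Q * Qᵀ = 1) (hV : V * Vᵀ = 1) {d : ι → ℝ} (hd : ∀ i, 0 < d i) :
    Λ (Q * (diagonal d)⁻¹ * V * T * (Q * (diagonal d)⁻¹ * V)ᵀ)
        (Q * diagonal d * V * (Q * diagonal d * V)ᵀ) =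
      Q * (diagonal d)⁻¹ * V * Λ T 1 * (Q * (diagonal d)⁻¹ * V)ᵀ := by
  have hDinv : ((diagonal d)⁻¹)ᵀ = (diagonal d)⁻¹ := by
    rw [transpose_nonsing_inv, diagonal_transpose]
  have hVT : (V * T * Vᵀ).PosSemidef := hT.mul_mul_transpose_same V
  have hX : ((diagonal d)⁻¹ * (V * T * Vᵀ) * (diagonal d)⁻¹).PosSemidef := by
    simpa only [hDinv] using hVT.mul_mul_transpose_same (diagonal d)⁻¹
  have hDD : (diagonal d * 1 * diagonal d).PosDef := by
    rw [mul_one, diagonal_mul_diagonal]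
    exact PosDef.diagonal fun i => mul_pos (hd i) (hd i)
  have hN : (Q * (diagonal d)⁻¹ * V)ᵀ = Vᵀ * (diagonal d)⁻¹ * Qᵀ := by
    simp only [transpose_mul, hDinv, mul_assoc]
  have hM : Q * diagonal d * V * (Q * diagonal d * V)ᵀ =
      Q * (diagonal d * 1 * diagonal d) * Qᵀ := by
    simp only [transpose_mul, diagonal_transpose, mul_assoc, mul_one]
    rw [← mul_assoc V, hV, one_mul]
  rw [hN, hM]
  calc _ = Λ (Q * ((diagonal d)⁻¹ * (V * T * Vᵀ) * (diagonal d)⁻¹) * Qᵀ)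
          (Q * (diagonal d * 1 * diagonal d) * Qᵀ) := by simp only [mul_assoc]
    _ = Q * Λ ((diagonal d)⁻¹ * (V * T * Vᵀ) * (diagonal d)⁻¹) (diagonal d * 1 * diagonal d) * Qᵀ :=
      hrot _ _ hX hDD Q hQ
    _ = Q * ((diagonal d)⁻¹ * (V * Λ T 1 * Vᵀ) * (diagonal d)⁻¹) * Qᵀ := by
      rw [hsplit _ _ hVT PosDef.one d hd, hrot.apply_mul_mul_transpose_one hT hV]
    _ = _ := by simp only [mul_assoc]

theorem apply_transpose_inv_mul_mul_inv (hsplit : SplitInvariant Λ) (hrot : RotationInvariant Λ)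
    {T : Matrix ι ι ℝ} (hT : T.PosSemidef) {L : Matrix ι ι ℝ} (hL : IsUnit L.det) :
    Λ ((L⁻¹)ᵀ * T * L⁻¹) (L * Lᵀ) = (L⁻¹)ᵀ * Λ T 1 * L⁻¹ := by
  obtain ⟨Q, V, hQ, hV, d, hd, rfl⟩ := exists_orthogonal_mul_diagonal_mul_orthogonal hL
  have hD : IsUnit (diagonal d).det := isUnit_det_diagonal_of_pos hd
  have hinv : (Q * diagonal d * V)⁻¹ = (Q * (diagonal d)⁻¹ * V)ᵀ := by
    refine inv_eq_left_inv ?_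
    simp only [transpose_mul, transpose_nonsing_inv, diagonal_transpose, ← mul_assoc]
    rw [mul_assoc _ Qᵀ Q, mul_eq_one_comm.mp hQ, mul_one, nonsing_inv_mul_cancel_right _ _ hD,
      mul_eq_one_comm.mp hV]
  rw [hinv, transpose_transpose]
  exact apply_orthogonal_diagonal_orthogonal hsplit hrot hT hQ hV hd

end CrossImpact

theorem return_based_split_rot_invariant_form_general {n : ℕ}
    (Λ : Matrix (Fin n) (Fin n) ℝ → Matrix (Fin n) (Fin n) ℝ → Matrix (Fin n) (Fin n) ℝ)
    (hsplit : ∀ S W : Matrix (Fin n) (Fin n) ℝ, S.PosSemidef → W.PosDef → ∀ d : Fin n → ℝ, (∀ i, 0 < d i) →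
      Λ ((diagonal d)⁻¹ * S * (diagonal d)⁻¹) (diagonal d * W * diagonal d)
        = (diagonal d)⁻¹ * Λ S W * (diagonal d)⁻¹)
    (hrot : ∀ S W : Matrix (Fin n) (Fin n) ℝ, S.PosSemidef → W.PosDef → ∀ O : Matrix (Fin n) (Fin n) ℝ, O * Oᵀ = 1 →
      Λ (O * S * Oᵀ) (O * W * Oᵀ) = O * Λ S W * Oᵀ)
    (S W : Matrix (Fin n) (Fin n) ℝ) (hS : S.PosSemidef)
    (L : Matrix (Fin n) (Fin n) ℝ) (hL : IsUnit L.det) (hLW : W = L * Lᵀ)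
    (U : Matrix (Fin n) (Fin n) ℝ) (hU : U * Uᵀ = 1) (μ : Fin n → ℝ)
    (hdiag : Uᵀ * (Lᵀ * S * L) * U = diagonal μ) :
    Λ S W = (L⁻¹)ᵀ * (U * Λ (diagonal μ) 1 * Uᵀ) * L⁻¹ := by
  have hT : (Lᵀ * S * L).PosSemidef := hS.transpose_mul_mul_same L
  have hμ : (diagonal μ).PosSemidef := hdiag ▸ hT.transpose_mul_mul_same U
  have hT_eq : Lᵀ * S * L = U * diagonal μ * Uᵀ := by
    rw [← hdiag]
    simp only [← mul_assoc, hU, one_mul]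
    rw [mul_assoc _ U, hU, mul_one]
  have hS_eq : (L⁻¹)ᵀ * (Lᵀ * S * L) * L⁻¹ = S := by
    have hLT : (L⁻¹)ᵀ * Lᵀ = 1 := by rw [← transpose_mul, mul_nonsing_inv L hL, transpose_one]
    simp only [← mul_assoc, hLT, one_mul]
    rw [mul_assoc, mul_nonsing_inv L hL, mul_one]
  calc Λ S W = Λ ((L⁻¹)ᵀ * (Lᵀ * S * L) * L⁻¹) (L * Lᵀ) := by rw [hS_eq, hLW]
    _ = (L⁻¹)ᵀ * Λ (Lᵀ * S * L) 1 * L⁻¹ :=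
      CrossImpact.apply_transpose_inv_mul_mul_inv hsplit hrot hT hL
    _ = (L⁻¹)ᵀ * (U * Λ (diagonal μ) 1 * Uᵀ) * L⁻¹ := by
      rw [hT_eq, CrossImpact.RotationInvariant.apply_mul_mul_transpose_one hrot hμ hU]

/-- Proposition 4, first part: a split- and rotation-invariant
return-covariance based cross-impact model is determined by its values on
pairs of a diagonal matrix and the identity. -/
theorem return_based_split_rot_invariant_form {n : ℕ}
    (Λ : Matrix (Fin n) (Fin n) ℝ → Matrix (Fin n) (Fin n) ℝ → Matrix (Fin n) (Fin n) ℝ)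
    (hsplit : ∀ S W : Matrix (Fin n) (Fin n) ℝ, S.PosSemidef → W.PosDef → ∀ d : Fin n → ℝ, (∀ i, 0 < d i) →
      Λ ((diagonal d)⁻¹ * S * (diagonal d)⁻¹) (diagonal d * W * diagonal d)
        = (diagonal d)⁻¹ * Λ S W * (diagonal d)⁻¹)
    (hrot : ∀ S W : Matrix (Fin n) (Fin n) ℝ, S.PosSemidef → W.PosDef → ∀ O : Matrix (Fin n) (Fin n) ℝ, O * Oᵀ = 1 →
      Λ (O * S * Oᵀ) (O * W * Oᵀ) = O * Λ S W * Oᵀ)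
    (S W : Matrix (Fin n) (Fin n) ℝ) (hS : S.PosSemidef) (hW : W.PosDef)
    (L : Matrix (Fin n) (Fin n) ℝ) (hL : IsUnit L.det) (hLW : W = L * Lᵀ)
    (U : Matrix (Fin n) (Fin n) ℝ) (hU : U * Uᵀ = 1) (μ : Fin n → ℝ)
    (hdiag : Uᵀ * (Lᵀ * S * L) * U = diagonal μ) :
    Λ S W = (L⁻¹)ᵀ * (U * Λ (diagonal μ) 1 * Uᵀ) * L⁻¹ :=
  return_based_split_rot_invariant_form_general Λ hsplit hrot S W hS L hL hLW U hU μ hdiag
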